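/- Let S_1,…,S_m be C-nondisturbing operators on H⊗K with probe operators B_i^k (so S_k(ψ_i ⊗ φ) = ψ_i ⊗ B_i^k φ). Then for any operators ρ on H, η on K and F on K, the full trace satisfies tr[ (∑_k S_k(ρ⊗η)S_k*) (I_H ⊗ F) ] = tr( ρ · ∑_{i=1}^n tr( (∑_k B_i^k η (B_i^k)*) F ) P_{ψ_i} ); that is, the measured observable of a C-nondisturbing measurement model with probe effect F is A_F = ∑_i tr(Γ_i(η) F) P_{ψ_i}, where Γ_i(η) = ∑_k B_i^k η (B_i^k)*. In particular each A_F is diagonal in the basis {ψ_i}. -/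

import Mathlib

open scoped ComplexOrder Kronecker

noncomputable section

/-- Tensor product of vectors in the concrete model `EuclideanSpace ℂ (Fin n × Fin m)` of `H ⊗ K`. -/
def tens {n m : ℕ} (x : EuclideanSpace ℂ (Fin n)) (y : EuclideanSpace ℂ (Fin m)) :
    EuclideanSpace ℂ (Fin n × Fin m) :=
  (WithLp.equiv 2 _).symm fun p => x p.1 * y p.2

/-- The rank-one operator `|x⟩⟨y|`. -/
def ketBra {ι : Type*} [Fintype ι] (x y : EuclideanSpace ℂ ι) :
    EuclideanSpace ℂ ι →ₗ[ℂ] EuclideanSpace ℂ ι where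
  toFun z := (inner ℂ y z : ℂ) • x
  map_add' a b := by simp [inner_add_right, add_smul]
  map_smul' c a := by simp [inner_smul_right, smul_smul]

/-- The tensor product of operators. -/
def opTens {n m : ℕ}
    (S : EuclideanSpace ℂ (Fin n) →ₗ[ℂ] EuclideanSpace ℂ (Fin n))
    (T : EuclideanSpace ℂ (Fin m) →ₗ[ℂ] EuclideanSpace ℂ (Fin m)) :
    EuclideanSpace ℂ (Fin n × Fin m) →ₗ[ℂ] EuclideanSpace ℂ (Fin n × Fin m) :=
  Matrix.toEuclideanLin
    ((Matrix.toEuclideanLin.symm S) ⊗ₖ (Matrix.toEuclideanLin.symm T))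

/-- `A` is C-nondisturbing for the context `C = {P_{ψ i}}`. -/
def Nondisturbing {n m : ℕ} (ψ : OrthonormalBasis (Fin n) ℂ (EuclideanSpace ℂ (Fin n)))
    (A : EuclideanSpace ℂ (Fin n × Fin m) →ₗ[ℂ] EuclideanSpace ℂ (Fin n × Fin m)) : Prop :=
  ∀ i, A ∘ₗ opTens (ketBra (ψ i) (ψ i)) LinearMap.id
      = opTens (ketBra (ψ i) (ψ i)) LinearMap.id ∘ₗ A

/-- `B i` are probe operators for `A`: `A (ψ i ⊗ φ) = ψ i ⊗ B i φ`. -/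
def ProbeOps {n m : ℕ} (ψ : OrthonormalBasis (Fin n) ℂ (EuclideanSpace ℂ (Fin n)))
    (A : EuclideanSpace ℂ (Fin n × Fin m) →ₗ[ℂ] EuclideanSpace ℂ (Fin n × Fin m))
    (B : Fin n → EuclideanSpace ℂ (Fin m) →ₗ[ℂ] EuclideanSpace ℂ (Fin m)) : Prop :=
  ∀ i φv, A (tens (ψ i) φv) = tens (ψ i) (B i φv)

/-- Loewner order: `S ≤ T` iff `⟪φ, (T - S) φ⟫` is real and nonnegative for every `φ`. -/
def opLE {ι : Type*} [Fintype ι]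
    (S T : EuclideanSpace ℂ ι →ₗ[ℂ] EuclideanSpace ℂ ι) : Prop :=
  ∀ φv, 0 ≤ (inner ℂ φv ((T - S) φv) : ℂ)

/-- The partial trace over `H`. -/
def trH {n m : ℕ} (ψ : OrthonormalBasis (Fin n) ℂ (EuclideanSpace ℂ (Fin n)))
    (φ : OrthonormalBasis (Fin m) ℂ (EuclideanSpace ℂ (Fin m)))
    (T : EuclideanSpace ℂ (Fin n × Fin m) →ₗ[ℂ] EuclideanSpace ℂ (Fin n × Fin m)) :
    EuclideanSpace ℂ (Fin m) →ₗ[ℂ] EuclideanSpace ℂ (Fin m) :=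
  ∑ j, ∑ k, (∑ i, (inner ℂ (tens (ψ i) (φ j)) (T (tens (ψ i) (φ k))) : ℂ)) • ketBra (φ j) (φ k)

/-- The partial trace over `K`. -/
def trK {n m : ℕ} (ψ : OrthonormalBasis (Fin n) ℂ (EuclideanSpace ℂ (Fin n)))
    (φ : OrthonormalBasis (Fin m) ℂ (EuclideanSpace ℂ (Fin m)))
    (T : EuclideanSpace ℂ (Fin n × Fin m) →ₗ[ℂ] EuclideanSpace ℂ (Fin n × Fin m)) :
    EuclideanSpace ℂ (Fin n) →ₗ[ℂ] EuclideanSpace ℂ (Fin n) :=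
  ∑ i, ∑ k, (∑ j, (inner ℂ (tens (ψ i) (φ j)) (T (tens (ψ k) (φ j))) : ℂ)) • ketBra (ψ i) (ψ k)

-- auxiliary lemmas

lemma tens_apply {n m : ℕ} (x : EuclideanSpace ℂ (Fin n)) (y : EuclideanSpace ℂ (Fin m)) (p) :
    tens x y p = x p.1 * y p.2 := rfl

lemma ketBra_apply {ι : Type*} [Fintype ι] (x y z : EuclideanSpace ℂ ι) :
    ketBra x y z = (inner ℂ y z : ℂ) • x := rfl

lemma tens_add_left {n m : ℕ} (a b : EuclideanSpace ℂ (Fin n)) (y : EuclideanSpace ℂ (Fin m)) :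
    tens (a + b) y = tens a y + tens b y := by
  ext p
  simp only [tens_apply, PiLp.add_apply]
  ring

lemma tens_smul_left {n m : ℕ} (c : ℂ) (a : EuclideanSpace ℂ (Fin n))
    (y : EuclideanSpace ℂ (Fin m)) : tens (c • a) y = c • tens a y := by
  ext p
  simp only [tens_apply, PiLp.smul_apply, smul_eq_mul]
  ring

lemma tens_zero_left {n m : ℕ} (y : EuclideanSpace ℂ (Fin m)) :
    tens (0 : EuclideanSpace ℂ (Fin n)) y = 0 := by
  ext p
  simp [tens_apply]

/-- tensor as a linear map in the first argument -/
def tensL {n m : ℕ} (y : EuclideanSpace ℂ (Fin m)) :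
    EuclideanSpace ℂ (Fin n) →ₗ[ℂ] EuclideanSpace ℂ (Fin n × Fin m) where
  toFun x := tens x y
  map_add' a b := tens_add_left a b y
  map_smul' c a := tens_smul_left c a y

lemma tens_single {n m : ℕ} (a : Fin n) (b : Fin m) :
    tens (EuclideanSpace.single a (1 : ℂ)) (EuclideanSpace.single b (1 : ℂ))
      = EuclideanSpace.single (a, b) (1 : ℂ) := by
  ext p
  simp only [tens_apply, EuclideanSpace.single_apply]
  by_cases h1 : p.1 = a <;> by_cases h2 : p.2 = b <;>
    simp [h1, h2, Prod.ext_iff]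

lemma euclid_decomp {ι : Type*} [Fintype ι] [DecidableEq ι] (z : EuclideanSpace ℂ ι) :
    ∑ p, z p • (EuclideanSpace.single p (1 : ℂ) : EuclideanSpace ℂ ι) = z := by
  have h := (EuclideanSpace.basisFun ι ℂ).sum_repr' z
  simpa [EuclideanSpace.basisFun_apply, EuclideanSpace.inner_single_left] using h

lemma ext_tens' {n m : ℕ}
    {S T : EuclideanSpace ℂ (Fin n × Fin m) →ₗ[ℂ] EuclideanSpace ℂ (Fin n × Fin m)}
    (h : ∀ x y, S (tens x y) = T (tens x y)) : S = T := by
  apply LinearMap.ext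
  intro z
  rw [← euclid_decomp z, map_sum, map_sum]
  refine Finset.sum_congr rfl fun p _ => ?_
  rw [map_smul, map_smul, ← tens_single, h]

lemma ext_tens {n m : ℕ} (ψ : OrthonormalBasis (Fin n) ℂ (EuclideanSpace ℂ (Fin n)))
    {S T : EuclideanSpace ℂ (Fin n × Fin m) →ₗ[ℂ] EuclideanSpace ℂ (Fin n × Fin m)}
    (h : ∀ i y, S (tens (ψ i) y) = T (tens (ψ i) y)) : S = T := by
  apply ext_tens'
  intro x y
  have hx : ∑ i, (inner ℂ (ψ i) x : ℂ) • ψ i = x := ψ.sum_repr' x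
  rw [← hx]
  have : tens (∑ i, (inner ℂ (ψ i) x : ℂ) • ψ i) y
      = ∑ i, (inner ℂ (ψ i) x : ℂ) • tens (ψ i) y := by
    rw [show ∀ v, tens v y = tensL y v from fun _ => rfl, map_sum]
    simp [tensL, tens_smul_left]
  rw [this, map_sum, map_sum]
  refine Finset.sum_congr rfl fun i _ => ?_
  rw [map_smul, map_smul, h]

lemma opTens_apply_tens {n m : ℕ}
    (A : EuclideanSpace ℂ (Fin n) →ₗ[ℂ] EuclideanSpace ℂ (Fin n))
    (B : EuclideanSpace ℂ (Fin m) →ₗ[ℂ] EuclideanSpace ℂ (Fin m)) (x y) :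
    opTens A B (tens x y) = tens (A x) (B y) := by
  have hA : (Matrix.toEuclideanLin.symm A).mulVec (WithLp.equiv 2 _ x)
      = WithLp.equiv 2 _ (A x) := by
    simp [← Matrix.ofLp_toEuclideanLin_apply]
  have hB : (Matrix.toEuclideanLin.symm B).mulVec (WithLp.equiv 2 _ y)
      = WithLp.equiv 2 _ (B y) := by
    simp [← Matrix.ofLp_toEuclideanLin_apply]
  have hA' : ∀ i, A x i = ((Matrix.toEuclideanLin.symm A).mulVec (WithLp.equiv 2 _ x)) i :=
    fun i => (congrFun hA i).symm
  have hB' : ∀ i, B y i = ((Matrix.toEuclideanLin.symm B).mulVec (WithLp.equiv 2 _ y)) i :=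
    fun i => (congrFun hB i).symm
  ext p
  show ((Matrix.toEuclideanLin.symm A ⊗ₖ Matrix.toEuclideanLin.symm B).mulVec
      (WithLp.equiv 2 _ (tens x y))) p = A x p.1 * B y p.2
  rw [hA' p.1, hB' p.2]
  simp [Matrix.mulVec, dotProduct, Fintype.sum_prod_type, tens, Matrix.kroneckerMap_apply,
    Finset.mul_sum, Finset.sum_mul]
  rw [Finset.sum_comm]
  apply Finset.sum_congr rfl; intro a _; apply Finset.sum_congr rfl; intro b _; ring

lemma opTens_comp {n m : ℕ}
    (A C : EuclideanSpace ℂ (Fin n) →ₗ[ℂ] EuclideanSpace ℂ (Fin n))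
    (B D : EuclideanSpace ℂ (Fin m) →ₗ[ℂ] EuclideanSpace ℂ (Fin m)) :
    opTens A B ∘ₗ opTens C D = opTens (A ∘ₗ C) (B ∘ₗ D) := by
  apply ext_tens'
  intro x y
  simp [LinearMap.comp_apply, opTens_apply_tens]

lemma kronecker_conjTranspose {n m : ℕ} (A : Matrix (Fin n) (Fin n) ℂ)
    (B : Matrix (Fin m) (Fin m) ℂ) : (A ⊗ₖ B).conjTranspose = A.conjTranspose ⊗ₖ B.conjTranspose := by
  ext p q
  simp [Matrix.conjTranspose_apply, Matrix.kroneckerMap_apply, mul_comm]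

lemma adjoint_opTens {n m : ℕ}
    (A : EuclideanSpace ℂ (Fin n) →ₗ[ℂ] EuclideanSpace ℂ (Fin n))
    (B : EuclideanSpace ℂ (Fin m) →ₗ[ℂ] EuclideanSpace ℂ (Fin m)) :
    LinearMap.adjoint (opTens A B) = opTens (LinearMap.adjoint A) (LinearMap.adjoint B) := by
  have hA : Matrix.toEuclideanLin.symm (LinearMap.adjoint A)
      = (Matrix.toEuclideanLin.symm A).conjTranspose := by
    apply Matrix.toEuclideanLin.injective
    rw [Matrix.toEuclideanLin_conjTranspose_eq_adjoint]
    simp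
  have hB : Matrix.toEuclideanLin.symm (LinearMap.adjoint B)
      = (Matrix.toEuclideanLin.symm B).conjTranspose := by
    apply Matrix.toEuclideanLin.injective
    rw [Matrix.toEuclideanLin_conjTranspose_eq_adjoint]
    simp
  unfold opTens
  rw [hA, hB, ← kronecker_conjTranspose, Matrix.toEuclideanLin_conjTranspose_eq_adjoint]

lemma trace_toEuclideanLin {ι : Type*} [Fintype ι] [DecidableEq ι] (M : Matrix ι ι ℂ) :
    LinearMap.trace ℂ (EuclideanSpace ℂ ι) (Matrix.toEuclideanLin M) = M.trace := by
  rw [Matrix.toEuclideanLin_eq_toLin,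
    LinearMap.trace_eq_matrix_trace ℂ (PiLp.basisFun 2 ℂ ι) , LinearMap.toMatrix_toLin]

lemma trace_opTens {n m : ℕ}
    (A : EuclideanSpace ℂ (Fin n) →ₗ[ℂ] EuclideanSpace ℂ (Fin n))
    (B : EuclideanSpace ℂ (Fin m) →ₗ[ℂ] EuclideanSpace ℂ (Fin m)) :
    LinearMap.trace ℂ (EuclideanSpace ℂ (Fin n × Fin m)) (opTens A B)
      = LinearMap.trace ℂ (EuclideanSpace ℂ (Fin n)) A
        * LinearMap.trace ℂ (EuclideanSpace ℂ (Fin m)) B := by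
  unfold opTens
  rw [trace_toEuclideanLin, Matrix.trace_kronecker]
  congr 1 <;> rw [← trace_toEuclideanLin] <;> simp

lemma ketBra_eq_matrix {ι : Type*} [Fintype ι] [DecidableEq ι] (x y : EuclideanSpace ℂ ι) :
    ketBra x y = Matrix.toEuclideanLin (Matrix.of fun i j => x i * (starRingEnd ℂ) (y j)) := by
  apply LinearMap.ext
  intro v
  ext i
  show (inner ℂ y v : ℂ) * x i = ((Matrix.of fun i j => x i * (starRingEnd ℂ) (y j)).mulVec
    (WithLp.equiv 2 _ v)) i
  simp [Matrix.mulVec, dotProduct, PiLp.inner_apply, RCLike.inner_apply, Finset.sum_mul]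
  apply Finset.sum_congr rfl
  intro j _
  ring

lemma trace_ketBra {ι : Type*} [Fintype ι] [DecidableEq ι] (x y : EuclideanSpace ℂ ι) :
    LinearMap.trace ℂ (EuclideanSpace ℂ ι) (ketBra x y) = (inner ℂ y x : ℂ) := by
  rw [ketBra_eq_matrix, trace_toEuclideanLin]
  simp [Matrix.trace, Matrix.diag, PiLp.inner_apply, RCLike.inner_apply, mul_comm]

lemma adjoint_ketBra {ι : Type*} [Fintype ι] [DecidableEq ι] (x y : EuclideanSpace ℂ ι) :
    LinearMap.adjoint (ketBra x y) = ketBra y x := by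
  rw [ketBra_eq_matrix x y, ← Matrix.toEuclideanLin_conjTranspose_eq_adjoint,
    ketBra_eq_matrix y x]
  congr 1
  ext i j
  simp [Matrix.conjTranspose_apply, mul_comm]

lemma comp_ketBra {ι : Type*} [Fintype ι]
    (A : EuclideanSpace ℂ ι →ₗ[ℂ] EuclideanSpace ℂ ι) (x y : EuclideanSpace ℂ ι) :
    A ∘ₗ ketBra x y = ketBra (A x) y := by
  apply LinearMap.ext
  intro z
  simp [LinearMap.comp_apply, ketBra_apply, map_smul]

lemma ketBra_smul_left {ι : Type*} [Fintype ι] (c : ℂ) (x y : EuclideanSpace ℂ ι) :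
    ketBra (c • x) y = c • ketBra x y := by
  apply LinearMap.ext
  intro z
  simp [ketBra_apply, smul_smul, mul_comm]

lemma comp_sum {ι : Type*} {E : Type*} [Fintype ι] [AddCommGroup E] [Module ℂ E]
    (f : E →ₗ[ℂ] E) (g : ι → (E →ₗ[ℂ] E)) :
    f ∘ₗ (∑ i, g i) = ∑ i, f ∘ₗ g i := by
  apply LinearMap.ext
  intro z
  simp [LinearMap.sum_apply, LinearMap.comp_apply]

lemma sum_comp' {ι : Type*} {E : Type*} [Fintype ι] [AddCommGroup E] [Module ℂ E]
    (g : ι → (E →ₗ[ℂ] E)) (f : E →ₗ[ℂ] E) :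
    (∑ i, g i) ∘ₗ f = ∑ i, g i ∘ₗ f := by
  apply LinearMap.ext
  intro z
  simp [LinearMap.sum_apply, LinearMap.comp_apply]

lemma comp_smul' {E : Type*} [AddCommGroup E] [Module ℂ E]
    (f g : E →ₗ[ℂ] E) (c : ℂ) : f ∘ₗ (c • g) = c • (f ∘ₗ g) := by
  apply LinearMap.ext
  intro z
  simp [LinearMap.comp_apply]

set_option maxHeartbeats 1000000 in
theorem stmt18 {n m p : ℕ} (ψ : OrthonormalBasis (Fin n) ℂ (EuclideanSpace ℂ (Fin n)))
    (S : Fin p → (EuclideanSpace ℂ (Fin n × Fin m) →ₗ[ℂ] EuclideanSpace ℂ (Fin n × Fin m))) (B : Fin n → Fin p → (EuclideanSpace ℂ (Fin m) →ₗ[ℂ] EuclideanSpace ℂ (Fin m)))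
    (hnd : ∀ k, Nondisturbing ψ (S k))
    (hprobe : ∀ k, ProbeOps ψ (S k) (fun i => B i k))
    (ρ : EuclideanSpace ℂ (Fin n) →ₗ[ℂ] EuclideanSpace ℂ (Fin n)) (η F : EuclideanSpace ℂ (Fin m) →ₗ[ℂ] EuclideanSpace ℂ (Fin m)) :
    LinearMap.trace ℂ (EuclideanSpace ℂ (Fin n × Fin m))
        ((∑ k, S k ∘ₗ opTens ρ η ∘ₗ LinearMap.adjoint (S k)) ∘ₗ opTens LinearMap.id F) =
      LinearMap.trace ℂ (EuclideanSpace ℂ (Fin n))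
        (ρ ∘ₗ ∑ i, (LinearMap.trace ℂ (EuclideanSpace ℂ (Fin m)) ((∑ k, B i k ∘ₗ η ∘ₗ LinearMap.adjoint (B i k)) ∘ₗ F)) •
          ketBra (ψ i) (ψ i)) ∧
    ∀ i, ∃ c : ℂ,
      (∑ i', (LinearMap.trace ℂ (EuclideanSpace ℂ (Fin m)) ((∑ k, B i' k ∘ₗ η ∘ₗ LinearMap.adjoint (B i' k)) ∘ₗ F)) •
        ketBra (ψ i') (ψ i')) (ψ i) = c • ψ i := by
  have hortho : ∀ i j, (inner ℂ (ψ i) (ψ j) : ℂ) = if i = j then 1 else 0 :=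
    orthonormal_iff_ite.mp ψ.orthonormal
  -- probe decomposition of S k
  have hS : ∀ k, S k = ∑ i, opTens (ketBra (ψ i) (ψ i)) (B i k) := by
    intro k
    apply ext_tens ψ
    intro i y
    rw [hprobe k i y, LinearMap.sum_apply]
    have : ∀ i', opTens (ketBra (ψ i') (ψ i')) (B i' k) (tens (ψ i) y)
        = if i' = i then tens (ψ i) (B i k y) else 0 := by
      intro i'
      rw [opTens_apply_tens, ketBra_apply, hortho]
      by_cases h : i' = i
      · simp [h]
      · simp [h, tens_zero_left]
    rw [Finset.sum_congr rfl fun i' _ => this i']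
    simp
  have hSadj : ∀ k, LinearMap.adjoint (S k)
      = ∑ i, opTens (ketBra (ψ i) (ψ i)) (LinearMap.adjoint (B i k)) := by
    intro k
    rw [hS k, map_sum]
    refine Finset.sum_congr rfl fun i _ => ?_
    rw [adjoint_opTens, adjoint_ketBra]
  -- abbreviations
  set Tr := LinearMap.trace ℂ (EuclideanSpace ℂ (Fin n × Fin m)) with hTr
  set trN := LinearMap.trace ℂ (EuclideanSpace ℂ (Fin n)) with htrN
  set trM := LinearMap.trace ℂ (EuclideanSpace ℂ (Fin m)) with htrM
  constructor
  · -- main trace identity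
    have key : ∀ k, Tr ((S k ∘ₗ opTens ρ η ∘ₗ LinearMap.adjoint (S k)) ∘ₗ opTens LinearMap.id F)
        = ∑ i, (inner ℂ (ψ i) (ρ (ψ i)) : ℂ)
            * trM (B i k ∘ₗ η ∘ₗ LinearMap.adjoint (B i k) ∘ₗ F) := by
      intro k
      rw [hSadj k, hS k]
      have hexp : ((∑ i, opTens (ketBra (ψ i) (ψ i)) (B i k)) ∘ₗ opTens ρ η ∘ₗ
            (∑ i', opTens (ketBra (ψ i') (ψ i')) (LinearMap.adjoint (B i' k)))) ∘ₗ
            opTens LinearMap.id F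
          = ∑ i, ∑ i', opTens
              (ketBra (ψ i) (ψ i) ∘ₗ ρ ∘ₗ ketBra (ψ i') (ψ i') ∘ₗ LinearMap.id)
              (B i k ∘ₗ η ∘ₗ LinearMap.adjoint (B i' k) ∘ₗ F) := by
        apply ext_tens'
        intro x y
        simp only [LinearMap.comp_apply, LinearMap.sum_apply, map_sum,
          opTens_apply_tens, LinearMap.id_apply]
        rw [Finset.sum_comm]
      rw [hexp, map_sum]
      refine Finset.sum_congr rfl fun i _ => ?_
      rw [map_sum]
      have hterm : ∀ i', Tr (opTens
            (ketBra (ψ i) (ψ i) ∘ₗ ρ ∘ₗ ketBra (ψ i') (ψ i') ∘ₗ LinearMap.id)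
            (B i k ∘ₗ η ∘ₗ LinearMap.adjoint (B i' k) ∘ₗ F))
          = if i' = i then (inner ℂ (ψ i) (ρ (ψ i)) : ℂ)
              * trM (B i k ∘ₗ η ∘ₗ LinearMap.adjoint (B i k) ∘ₗ F) else 0 := by
        intro i'
        rw [hTr, htrM, trace_opTens]
        have h1 : ketBra (ψ i) (ψ i) ∘ₗ ρ ∘ₗ ketBra (ψ i') (ψ i') ∘ₗ LinearMap.id
            = (inner ℂ (ψ i) (ρ (ψ i')) : ℂ) • ketBra (ψ i) (ψ i') := by
          have hmid : ρ ∘ₗ ketBra (ψ i') (ψ i') ∘ₗ LinearMap.id = ketBra (ρ (ψ i')) (ψ i') := by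
            rw [LinearMap.comp_id, comp_ketBra]
          rw [hmid, comp_ketBra, ketBra_apply, ketBra_smul_left]
        rw [h1, map_smul, trace_ketBra, hortho]
        by_cases h : i' = i
        · subst h; simp [smul_eq_mul]
        · simp [h]
      rw [Finset.sum_congr rfl fun i' _ => hterm i']
      simp only [Finset.sum_ite_eq', Finset.mem_univ, if_true]
    rw [sum_comp', map_sum]
    rw [Finset.sum_congr rfl fun k _ => key k]
    -- now handle RHS
    have hRexp : ρ ∘ₗ (∑ i, (trM ((∑ k, B i k ∘ₗ η ∘ₗ LinearMap.adjoint (B i k)) ∘ₗ F)) •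
          ketBra (ψ i) (ψ i))
        = ∑ i, ρ ∘ₗ ((trM ((∑ k, B i k ∘ₗ η ∘ₗ LinearMap.adjoint (B i k)) ∘ₗ F)) •
          ketBra (ψ i) (ψ i)) := comp_sum _ _
    have hR2 : trN (ρ ∘ₗ ∑ i, (trM ((∑ k, B i k ∘ₗ η ∘ₗ LinearMap.adjoint (B i k)) ∘ₗ F)) •
          ketBra (ψ i) (ψ i))
        = ∑ i, trN (ρ ∘ₗ ((trM ((∑ k, B i k ∘ₗ η ∘ₗ LinearMap.adjoint (B i k)) ∘ₗ F)) •
          ketBra (ψ i) (ψ i))) := by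
      rw [hRexp]; exact map_sum trN _ Finset.univ
    rw [hR2]
    have hrhs : ∀ i, trN (ρ ∘ₗ (((trM ((∑ k, B i k ∘ₗ η ∘ₗ LinearMap.adjoint (B i k)) ∘ₗ F))) •
          ketBra (ψ i) (ψ i)))
        = (∑ k, trM (B i k ∘ₗ η ∘ₗ LinearMap.adjoint (B i k) ∘ₗ F))
            * (inner ℂ (ψ i) (ρ (ψ i)) : ℂ) := by
      intro i
      have h2 : ρ ∘ₗ ((trM ((∑ k, B i k ∘ₗ η ∘ₗ LinearMap.adjoint (B i k)) ∘ₗ F)) •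
            ketBra (ψ i) (ψ i))
          = (trM ((∑ k, B i k ∘ₗ η ∘ₗ LinearMap.adjoint (B i k)) ∘ₗ F)) •
            ketBra (ρ (ψ i)) (ψ i) := by
        rw [comp_smul', comp_ketBra]
      rw [h2, map_smul, htrN, trace_ketBra]
      have h3 : trM ((∑ k, B i k ∘ₗ η ∘ₗ LinearMap.adjoint (B i k)) ∘ₗ F)
          = ∑ k, trM (B i k ∘ₗ η ∘ₗ LinearMap.adjoint (B i k) ∘ₗ F) := by
        rw [sum_comp', map_sum]
        refine Finset.sum_congr rfl fun k _ => rfl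
      rw [h3, smul_eq_mul]
    rw [Finset.sum_congr rfl fun i _ => hrhs i]
    rw [Finset.sum_comm]
    refine Finset.sum_congr rfl fun i _ => ?_
    rw [Finset.sum_mul]
    refine Finset.sum_congr rfl fun k _ => ?_
    ring
  · -- diagonality
    intro i
    refine ⟨trM ((∑ k, B i k ∘ₗ η ∘ₗ LinearMap.adjoint (B i k)) ∘ₗ F), ?_⟩
    rw [LinearMap.sum_apply]
    have : ∀ i', ((trM ((∑ k, B i' k ∘ₗ η ∘ₗ LinearMap.adjoint (B i' k)) ∘ₗ F)) •
        ketBra (ψ i') (ψ i')) (ψ i)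
        = if i' = i then (trM ((∑ k, B i k ∘ₗ η ∘ₗ LinearMap.adjoint (B i k)) ∘ₗ F)) • ψ i
          else 0 := by
      intro i'
      rw [LinearMap.smul_apply, ketBra_apply, hortho]
      by_cases h : i' = i
      · simp [h]
      · simp [h]
    rw [Finset.sum_congr rfl fun i' _ => this i']
    simp only [Finset.sum_ite_eq', Finset.mem_univ, if_true]
end
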